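/- Let d ∈ ℕ, Φ = (φ₀,…,φ_d) ∈ ℝ^{d+1} and s ∈ {0,1}^d, with d₁ the Hamming weight of s and d₂ = d − d₁, and let P and Q be the (1,1) and (1,2) entries of the M-QSP unitary M_{Φ,s}. Then for all x₁, x₂ ∈ ℝ: P(x₁+π, x₂) = (−1)^{d₁} P(x₁, x₂), Q(x₁+π, x₂) = (−1)^{d₁} Q(x₁, x₂), P(x₁, x₂+π) = (−1)^{d₂} P(x₁, x₂), and Q(x₁, x₂+π) = (−1)^{d₂} Q(x₁, x₂). -/
import Mathlib


/-!
STATEMENT 5 (M-QSP: parity under shifts by π in each variable).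
-/

open Complex Matrix
open scoped Matrix

noncomputable def Wgate (x : ℝ) : Matrix (Fin 2) (Fin 2) ℂ :=
  !![(Real.cos x : ℂ), (Real.sin x : ℂ) * Complex.I;
     (Real.sin x : ℂ) * Complex.I, (Real.cos x : ℂ)]

noncomputable def Zgate (φ : ℝ) : Matrix (Fin 2) (Fin 2) ℂ :=
  !![Complex.exp ((φ : ℂ) * Complex.I), 0;
     0, Complex.exp (-(φ : ℂ) * Complex.I)]

/-- The M-QSP unitary
`M_{Φ,s}(x₁,x₂) = Z(φ₀)·∏_{k=1}^d (W(x₁)^{s_k}·W(x₂)^{1-s_k}·Z(φ_k))`,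
where each `s k ∈ {0,1}`. -/
noncomputable def Mmqsp (d : ℕ) (Φ : Fin (d + 1) → ℝ) (s : Fin d → ℕ)
    (x₁ x₂ : ℝ) : Matrix (Fin 2) (Fin 2) ℂ :=
  Zgate (Φ 0) *
    (List.ofFn (fun k : Fin d =>
      Wgate x₁ ^ (s k) * Wgate x₂ ^ (1 - s k) * Zgate (Φ k.succ))).prod

lemma Wgate_pi_shift (x : ℝ) : Wgate (x + Real.pi) = - Wgate x := by
  unfold Wgate
  ext i j
  fin_cases i <;> fin_cases j <;>
    simp [Real.cos_add_pi, Real.sin_add_pi, neg_mul]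

lemma prod_smul_ofFn (n : ℕ) (c : Fin n → ℂ) (A : Fin n → Matrix (Fin 2) (Fin 2) ℂ) :
    (List.ofFn (fun k => c k • A k)).prod = (∏ k, c k) • (List.ofFn A).prod := by
  induction n with
  | zero => simp
  | succ n ih =>
    rw [List.ofFn_succ, List.ofFn_succ, List.prod_cons, List.prod_cons,
      ih (fun k => c k.succ) (fun k => A k.succ), Fin.prod_univ_succ]
    rw [smul_mul_assoc, mul_smul_comm, smul_smul]

lemma mqsp_shift (d : ℕ) (Φ : Fin (d + 1) → ℝ) (s : Fin d → ℕ)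
    (x₁ x₂ : ℝ) :
    Mmqsp d Φ s (x₁ + Real.pi) x₂ = ((-1 : ℂ) ^ (∑ k, s k)) • Mmqsp d Φ s x₁ x₂ ∧
    Mmqsp d Φ s x₁ (x₂ + Real.pi) = ((-1 : ℂ) ^ (∑ k, (1 - s k))) • Mmqsp d Φ s x₁ x₂ := by
  constructor
  · unfold Mmqsp
    have h : (fun k : Fin d =>
        Wgate (x₁ + Real.pi) ^ (s k) * Wgate x₂ ^ (1 - s k) * Zgate (Φ k.succ)) =
        fun k : Fin d => ((-1 : ℂ) ^ (s k)) •
          (Wgate x₁ ^ (s k) * Wgate x₂ ^ (1 - s k) * Zgate (Φ k.succ)) := by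
      funext k
      rw [Wgate_pi_shift, ← neg_one_smul ℂ (Wgate x₁), smul_pow,
        smul_mul_assoc, smul_mul_assoc]
    rw [h, prod_smul_ofFn, mul_smul_comm, Finset.prod_pow_eq_pow_sum]
  · unfold Mmqsp
    have h : (fun k : Fin d =>
        Wgate x₁ ^ (s k) * Wgate (x₂ + Real.pi) ^ (1 - s k) * Zgate (Φ k.succ)) =
        fun k : Fin d => ((-1 : ℂ) ^ (1 - s k)) •
          (Wgate x₁ ^ (s k) * Wgate x₂ ^ (1 - s k) * Zgate (Φ k.succ)) := by
      funext k
      rw [Wgate_pi_shift, ← neg_one_smul ℂ (Wgate x₂), smul_pow,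
        mul_smul_comm, smul_mul_assoc]
    rw [h, prod_smul_ofFn, mul_smul_comm, Finset.prod_pow_eq_pow_sum]

theorem mqsp_pi_shift_parity (d : ℕ) (Φ : Fin (d + 1) → ℝ)
    (s : Fin d → ℕ) (hs : ∀ k, s k ≤ 1)
    (d₁ d₂ : ℕ) (hd₁ : d₁ = ∑ k, s k) (hd₂ : d₂ = d - d₁) :
    ∀ x₁ x₂ : ℝ,
      Mmqsp d Φ s (x₁ + Real.pi) x₂ 0 0 = (-1 : ℂ) ^ d₁ * Mmqsp d Φ s x₁ x₂ 0 0 ∧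
      Mmqsp d Φ s (x₁ + Real.pi) x₂ 0 1 = (-1 : ℂ) ^ d₁ * Mmqsp d Φ s x₁ x₂ 0 1 ∧
      Mmqsp d Φ s x₁ (x₂ + Real.pi) 0 0 = (-1 : ℂ) ^ d₂ * Mmqsp d Φ s x₁ x₂ 0 0 ∧
      Mmqsp d Φ s x₁ (x₂ + Real.pi) 0 1 = (-1 : ℂ) ^ d₂ * Mmqsp d Φ s x₁ x₂ 0 1 := by
  intro x₁ x₂
  obtain ⟨h1, h2⟩ := mqsp_shift d Φ s x₁ x₂
  have hsum : ∑ k, (1 - s k) = d₂ := by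
    have h := Finset.sum_add_distrib (f := fun k : Fin d => s k)
      (g := fun k : Fin d => 1 - s k) (s := Finset.univ)
    have h' : ∀ k : Fin d, s k + (1 - s k) = 1 := fun k => by have := hs k; omega
    rw [Finset.sum_congr rfl (fun k _ => h' k)] at h
    simp at h
    omega
  subst hd₁ hd₂
  rw [← hsum]
  refine ⟨?_, ?_, ?_, ?_⟩ <;>
    first
      | (rw [h1]; simp [Matrix.smul_apply])
      | (rw [h2]; simp [Matrix.smul_apply])
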